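/- Let μ be an AMS and ergodic probability measure on ℝ^ℕ with stationary mean μ̄ and one-dimensional marginal μ̄₁, and let p > 0. Assume 0 < ∫_ℝ |x|^p dμ̄₁(x) < ∞ and that μ̄₁ is absolutely continuous with respect to Lebesgue measure. Then for every r ∈ (0,1] there exists τ(r) ≥ 0 with μ̄₁(B_{τ(r)}) = r, and for every such τ(r) and every sequence of nonnegative integers (k_n) with k_n/n → r, σ̃_p(k_n, X^n) → (1 − v_p(B_{τ(r)}))^{1/p} μ-almost surely. -/

import Mathlib

open MeasureTheory Filter Set
open scoped ENNReal Topology Classical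

noncomputable section

/-- Left shift on real sequences. -/
def shift : (ℕ → ℝ) → (ℕ → ℝ) := fun x n => x (n + 1)

/-- First `n` coordinates of a sequence. -/
def proj (n : ℕ) (x : ℕ → ℝ) : Fin n → ℝ := fun i => x i

/-- Best `k`-term `ℓp`-approximation error of `x ∈ ℝ^n`. -/
def sigmaP (p : ℝ) (n k : ℕ) (x : Fin n → ℝ) : ℝ :=
  sInf {e : ℝ | ∃ S : Finset (Fin n), S.card = k ∧ e = (∑ i ∈ Sᶜ, |x i| ^ p) ^ (1 / p)}

/-- Relative best `k`-term `ℓp`-approximation error. -/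
def sigmaTilde (p : ℝ) (n k : ℕ) (x : Fin n → ℝ) : ℝ :=
  sigmaP p n k x / (∑ i, |x i| ^ p) ^ (1 / p)

/-- The set `A^{n,k}_d` of vectors with relative approximation error at most `d`. -/
def Ad (p : ℝ) (n k : ℕ) (d : ℝ) : Set (Fin n → ℝ) := {x | sigmaTilde p n k x ≤ d}

/-- `μ_n`: law of the first `n` coordinates. -/
def lawn (μ : Measure (ℕ → ℝ)) (n : ℕ) : Measure (Fin n → ℝ) := μ.map (proj n)

/-- Strong `ℓp`-characterization with constant limiting function `f : (0,1] → [0,1]`. -/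
def StrongLpChar (p : ℝ) (μ : Measure (ℕ → ℝ)) (f : ℝ → ℝ) : Prop :=
  (∀ r ∈ Set.Ioc (0:ℝ) 1, f r ∈ Set.Icc (0:ℝ) 1) ∧
  ∀ r ∈ Set.Ioc (0:ℝ) 1, ∀ k : ℕ → ℕ,
    Tendsto (fun n : ℕ => (k n : ℝ) / n) atTop (𝓝 r) →
    ∀ᵐ x ∂μ, Tendsto (fun n : ℕ => sigmaTilde p n (k n) (proj n x)) atTop (𝓝 (f r))

/-- `κ̃_p(d, ε, μ_n)`. -/
def kappaP (p : ℝ) (μ : Measure (ℕ → ℝ)) (d ε : ℝ) (n : ℕ) : ℕ :=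
  sInf {k : ℕ | 1 ≤ k ∧ k ≤ n ∧ 1 - ε ≤ (lawn μ n (Ad p n k d)).toReal}

/-- `r̃⁺_p(d, ε, μ)`. -/
def rTildePlus (p : ℝ) (μ : Measure (ℕ → ℝ)) (d ε : ℝ) : ℝ :=
  Filter.limsup (fun n : ℕ => (kappaP p μ d ε n : ℝ) / n) atTop

/-- `r̃⁻_p(d, ε, μ)`. -/
def rTildeMinus (p : ℝ) (μ : Measure (ℕ → ℝ)) (d ε : ℝ) : ℝ :=
  Filter.liminf (fun n : ℕ => (kappaP p μ d ε n : ℝ) / n) atTop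

/-- `(r, d)` is `ℓp`-achievable with probability `ε`. -/
def Achievable (p : ℝ) (μ : Measure (ℕ → ℝ)) (d ε r : ℝ) : Prop :=
  ∃ k : ℕ → ℕ, Filter.limsup (fun n : ℕ => (k n : ℝ) / n) atTop ≤ r ∧
    1 - ε ≤ Filter.liminf (fun n : ℕ => (lawn μ n (Ad p n (k n) d)).toReal) atTop

/-- `r_p(d, ε, μ)`: the rate-approximation error function. -/
def rOp (p : ℝ) (μ : Measure (ℕ → ℝ)) (d ε : ℝ) : ℝ :=
  sInf {r : ℝ | r ∈ Set.Icc (0:ℝ) 1 ∧ Achievable p μ d ε r}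

/-- `μ` is AMS with stationary mean `ν`. -/
def HasStationaryMean (μ ν : Measure (ℕ → ℝ)) : Prop :=
  ∀ F : Set (ℕ → ℝ), MeasurableSet F →
    Tendsto (fun n : ℕ => (∑ i ∈ Finset.range n, (μ (shift^[i] ⁻¹' F)).toReal) / n)
      atTop (𝓝 (ν F).toReal)

/-- `μ` is asymptotically mean stationary. -/
def IsAMS (μ : Measure (ℕ → ℝ)) : Prop :=
  ∀ F : Set (ℕ → ℝ), MeasurableSet F →
    ∃ L : ℝ, Tendsto (fun n : ℕ => (∑ i ∈ Finset.range n, (μ (shift^[i] ⁻¹' F)).toReal) / n)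
      atTop (𝓝 L)

/-- `ν` is stationary with respect to the shift. -/
def IsStationaryShift (ν : Measure (ℕ → ℝ)) : Prop :=
  ∀ F : Set (ℕ → ℝ), MeasurableSet F → ν (shift ⁻¹' F) = ν F

/-- `μ` is ergodic with respect to the shift. -/
def IsErgodicShift (μ : Measure (ℕ → ℝ)) : Prop :=
  ∀ F : Set (ℕ → ℝ), MeasurableSet F → shift ⁻¹' F = F → μ F = 0 ∨ μ F = 1

/-- 1D marginal: the law of the first coordinate. -/
def marginal1 (ν : Measure (ℕ → ℝ)) : Measure ℝ := ν.map (fun x => x 0)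

/-- The `p`-th absolute moment `∫ |x|^p dν` (as an extended real). -/
def momentP (p : ℝ) (ν : Measure ℝ) : ℝ≥0∞ := ∫⁻ x, ENNReal.ofReal (|x| ^ p) ∂ν

/-- Tail set `B_τ = (−∞,−τ] ∪ [τ,∞)`. -/
def Btau (τ : ℝ) : Set ℝ := Set.Iic (-τ) ∪ Set.Ici τ

/-- Tail set `C_τ = (−∞,−τ) ∪ (τ,∞)`. -/
def Ctau (τ : ℝ) : Set ℝ := Set.Iio (-τ) ∪ Set.Ioi τ

/-- Tail distribution function `φ_ν(τ) = ν(B_τ)`. -/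
def phiTail (ν : Measure ℝ) (τ : ℝ) : ℝ := (ν (Btau τ)).toReal

/-- `v_p(B) = (∫_B |x|^p dν) / (∫_ℝ |x|^p dν)`. -/
def vP (p : ℝ) (ν : Measure ℝ) (B : Set ℝ) : ℝ :=
  ((∫⁻ x in B, ENNReal.ofReal (|x| ^ p) ∂ν) / momentP p ν).toReal

/-- The rate vs approximation error graph `F_ν`. -/
def Fgraph (p : ℝ) (ν : Measure ℝ) : Set (ℝ × ℝ) :=
  {q | ∃ τ : ℝ, 0 ≤ τ ∧ q = (phiTail ν τ, (1 - vP p ν (Btau τ)) ^ (1 / p))} ∪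
  {q | ∃ τ : ℝ, 0 ≤ τ ∧ 0 < (ν ({-τ, τ} : Set ℝ)).toReal ∧
       ∃ α ∈ Set.Ico (0:ℝ) 1,
         q = ((ν (Ctau τ)).toReal + α * (ν ({-τ, τ} : Set ℝ)).toReal,
              (1 - vP p ν (Ctau τ) - α * vP p ν ({-τ, τ} : Set ℝ)) ^ (1 / p))}

/-- Approximation error function `f_{p,ν} : (0,1] → [0,1)`, defined through its graph `F_ν`,
with the convention `f_{p,ν} ≡ 0` when the `p`-th moment of `ν` is infinite. -/
def fApprox (p : ℝ) (ν : Measure ℝ) (r : ℝ) : ℝ :=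
  if momentP p ν = ∞ then 0 else sSup {d : ℝ | (r, d) ∈ Fgraph p ν}

/-!
Birkhoff's theorem for the stationary mean `ν`, transported to `μ` through the shift-invariant
set of sequences whose averages converge (`μ` and `ν` agree on invariant sets), shows that almost
surely, for every rational threshold `s`, the fraction of the `x i` lying in `B_s` tends to
`μ̄₁(B_s)` and the share of `∑ |x i|^p` carried by the entries outside `B_s` tends to
`1 - v_p(B_s)`. A best `k`-term approximation keeps the `k` largest entries, so its relative
error is at most that share when at most `k` entries lie in `B_s`, and at least that share when
at least `k` do. As `μ̄₁` has no atoms, its tail function is continuous, so there are rational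
thresholds whose tail probability is just below or just above `r`; their tails differ from
`B_{τ(r)}` by sets of small `μ̄₁`-measure, hence of small `|x|^p`-mass.
-/

section Birkhoff

variable {α : Type*} {T : α → α} {f : α → ℝ}

def birkhoffMax (T : α → α) (f : α → ℝ) (N : ℕ) : α → ℝ :=
  (Finset.range (N + 1)).sup' Finset.nonempty_range_add_one fun n => birkhoffSum T f n

lemma birkhoffMax_apply (N : ℕ) (x : α) :
    birkhoffMax T f N x =
      (Finset.range (N + 1)).sup' Finset.nonempty_range_add_one fun n => birkhoffSum T f n x :=
  Finset.sup'_apply _ _ x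

lemma birkhoffSum_le_birkhoffMax {n N : ℕ} (h : n ≤ N) (x : α) :
    birkhoffSum T f n x ≤ birkhoffMax T f N x := by
  rw [birkhoffMax_apply]
  exact Finset.le_sup' (fun n => birkhoffSum T f n x) (Finset.mem_range_succ_iff.2 h)

lemma birkhoffMax_nonneg (N : ℕ) (x : α) : 0 ≤ birkhoffMax T f N x := by
  simpa using birkhoffSum_le_birkhoffMax (T := T) (f := f) (Nat.zero_le N) x

lemma birkhoffMax_mono (x : α) : Monotone fun N => birkhoffMax T f N x := fun N M h => by
  simp only [birkhoffMax_apply]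
  exact Finset.sup'_mono _ (Finset.range_subset_range.2 (by omega)) _

lemma birkhoffMax_le_add_birkhoffMax_apply {N : ℕ} {x : α} (hx : 0 < birkhoffMax T f N x) :
    birkhoffMax T f N x ≤ f x + birkhoffMax T f N (T x) := by
  obtain ⟨n, hn, hmax⟩ := Finset.exists_mem_eq_sup' Finset.nonempty_range_add_one
    fun n => birkhoffSum T f n x
  rw [← birkhoffMax_apply] at hmax
  rw [hmax] at hx ⊢
  obtain ⟨m, rfl⟩ : ∃ m, n = m + 1 := Nat.exists_eq_succ_of_ne_zero (by rintro rfl; simp at hx)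
  rw [birkhoffSum_succ']
  have := birkhoffSum_le_birkhoffMax (T := T) (f := f) (n := m) (N := N)
    (by have := Finset.mem_range.1 hn; omega) (T x)
  linarith

lemma bddAbove_range_birkhoffSum_apply_iff (x : α) :
    BddAbove (range fun n => birkhoffSum T f n (T x)) ↔
      BddAbove (range fun n => birkhoffSum T f n x) := by
  simp only [bddAbove_def, forall_mem_range]
  constructor
  · rintro ⟨M, hM⟩
    refine ⟨max 0 (f x + M), fun n => ?_⟩
    cases n with
    | zero => simp
    | succ n => rw [birkhoffSum_succ']; exact le_max_of_le_right (by linarith [hM n])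
  · rintro ⟨M, hM⟩
    exact ⟨M - f x, fun n => by linarith [hM (n + 1), birkhoffSum_succ' T f n x]⟩

variable {x : α} {L : ℝ} in
/-- The averages along the orbits of `x` and of `T x` have the same limit, since the Birkhoff
averages satisfy `(n + 1) A_{n+1} x = f x + n A_n (T x)`. -/
theorem tendsto_birkhoffAverage_apply_iff :
    Tendsto (fun n => birkhoffAverage ℝ T f n (T x)) atTop (𝓝 L) ↔
      Tendsto (fun n => birkhoffAverage ℝ T f n x) atTop (𝓝 L) := by
  have hsucc : ∀ n : ℕ, birkhoffAverage ℝ T f (n + 1) x =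
      ((n : ℝ) + 1)⁻¹ * f x + (n / (n + 1)) * birkhoffAverage ℝ T f n (T x) := by
    intro n
    simp only [birkhoffAverage, smul_eq_mul, birkhoffSum_succ', Nat.cast_add, Nat.cast_one]
    rcases n.eq_zero_or_pos with rfl | hn
    · simp
    · field_simp
  constructor
  · intro h
    rw [← tendsto_add_atTop_iff_nat 1]
    simp only [hsucc]
    simpa using ((tendsto_one_div_add_atTop_nhds_zero_nat (𝕜 := ℝ)).mul_const (f x)).add
      ((tendsto_natCast_div_add_atTop (1 : ℝ)).mul h)
  · intro h
    have h1 := (tendsto_add_atTop_iff_nat 1).2 h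
    have key := (((tendsto_const_nhds (x := (1 : ℝ))).add
      (tendsto_inv_atTop_nhds_zero_nat (𝕜 := ℝ))).mul h1).sub
      ((tendsto_inv_atTop_nhds_zero_nat (𝕜 := ℝ)).mul_const (f x))
    simp only [add_zero, one_mul, zero_mul, sub_zero] at key
    refine key.congr' ((eventually_gt_atTop 0).mono fun n hn => ?_)
    rw [hsucc]
    have : (n : ℝ) ≠ 0 := Nat.cast_ne_zero.2 hn.ne'
    field_simp
    ring

variable [MeasurableSpace α] {μ : Measure α}

lemma measurable_birkhoffMax (hT : Measurable T) (hf : Measurable f) (N : ℕ) :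
    Measurable (birkhoffMax T f N) :=
  Finset.sup'_induction (p := Measurable) _ _ (fun _ h₁ _ h₂ => h₁.sup h₂) fun _ _ =>
    Finset.measurable_sum _ fun i _ => hf.comp (hT.iterate i)

lemma integrable_birkhoffMax (hT : MeasurePreserving T μ μ) (hf : Integrable f μ) (N : ℕ) :
    Integrable (birkhoffMax T f N) μ :=
  Finset.sup'_induction (p := (Integrable · μ)) _ _ (fun _ h₁ _ h₂ => h₁.sup h₂) fun _ _ =>
    integrable_finsetSum _ fun i _ => (hT.iterate i).integrable_comp_of_integrable hf

/-- The maximal ergodic theorem, with Garsia's proof. -/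
theorem MeasureTheory.MeasurePreserving.setIntegral_birkhoffMax_pos_nonneg
    (hT : MeasurePreserving T μ μ) (hf : Measurable f) (hfi : Integrable f μ) (N : ℕ) :
    0 ≤ ∫ x in {x | 0 < birkhoffMax T f N x}, f x ∂μ := by
  set A := {x | 0 < birkhoffMax T f N x}
  have hA : MeasurableSet A := measurableSet_lt measurable_const
    (measurable_birkhoffMax hT.measurable hf N)
  have hP := integrable_birkhoffMax hT hfi N
  have hPT : Integrable (fun x => birkhoffMax T f N (T x)) μ :=
    hT.integrable_comp_of_integrable hP
  have hPA : ∫ x in A, birkhoffMax T f N x ∂μ = ∫ x, birkhoffMax T f N x ∂μ :=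
    setIntegral_eq_integral_of_forall_compl_eq_zero fun x hx =>
      le_antisymm (not_lt.1 hx) (birkhoffMax_nonneg N x)
  have hPTA : ∫ x in A, birkhoffMax T f N (T x) ∂μ ≤ ∫ x, birkhoffMax T f N x ∂μ := by
    calc ∫ x in A, birkhoffMax T f N (T x) ∂μ ≤ ∫ x, birkhoffMax T f N (T x) ∂μ :=
          setIntegral_le_integral hPT (Eventually.of_forall fun x => birkhoffMax_nonneg N _)
      _ = ∫ x, birkhoffMax T f N x ∂μ := by
          rw [← integral_map hT.measurable.aemeasurable (by rw [hT.map_eq]; exact hP.1),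
            hT.map_eq]
  have key : ∫ x in A, birkhoffMax T f N x ∂μ ≤
      ∫ x in A, f x ∂μ + ∫ x in A, birkhoffMax T f N (T x) ∂μ := by
    rw [← integral_add hfi.integrableOn hPT.integrableOn]
    exact setIntegral_mono_on hP.integrableOn (hfi.integrableOn.add hPT.integrableOn) hA
      fun x hx => birkhoffMax_le_add_birkhoffMax_apply hx
  linarith

/-- The set where the Birkhoff sums are bounded above is invariant; were it null, the maximal
ergodic theorem would give `0 ≤ ∫ f`. -/
lemma Ergodic.ae_bddAbove_birkhoffSum (hT : Ergodic T μ) (hf : Measurable f)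
    (hfi : Integrable f μ) (hneg : ∫ x, f x ∂μ < 0) :
    ∀ᵐ x ∂μ, BddAbove (range fun n => birkhoffSum T f n x) := by
  have hS : ∀ n, Measurable (birkhoffSum T f n) := fun n =>
    Finset.measurable_sum _ fun i _ => hf.comp (hT.measurable.iterate i)
  set E := {x | BddAbove (range fun n => birkhoffSum T f n x)}
  have hEinv : T ⁻¹' E = E := Set.ext bddAbove_range_birkhoffSum_apply_iff
  rcases hT.measure_self_or_compl_eq_zero (measurableSet_bddAbove_range hS) hEinv with h | h
  · exfalso
    set A := fun N => {x | 0 < birkhoffMax T f N x}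
    have hA : ∀ N, MeasurableSet (A N) := fun N =>
      measurableSet_lt measurable_const (measurable_birkhoffMax hT.measurable hf N)
    have hAE : ∀ᵐ x ∂μ, x ∈ ⋃ N, A N := by
      filter_upwards [measure_eq_zero_iff_ae_notMem.1 h] with x hx
      obtain ⟨n, hn⟩ : ∃ n, 0 < birkhoffSum T f n x := by
        simp only [not_bddAbove_iff] at hx
        simpa using hx 0
      exact mem_iUnion.2 ⟨n, hn.trans_le (birkhoffSum_le_birkhoffMax le_rfl x)⟩
    have hlim := tendsto_setIntegral_of_monotone hA
      (fun N M h => ofPred_subset_ofPred.2 fun x hx => hx.trans_le (birkhoffMax_mono x h))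
      hfi.integrableOn
    rw [Measure.restrict_eq_self_of_ae_mem hAE] at hlim
    exact hneg.not_ge (ge_of_tendsto' hlim fun N =>
      hT.toMeasurePreserving.setIntegral_birkhoffMax_pos_nonneg hf hfi N)
  · exact measure_eq_zero_iff_ae_notMem.1 h |>.mono fun x hx => not_not.1 hx

variable [IsProbabilityMeasure μ]

lemma Ergodic.ae_eventually_birkhoffAverage_lt (hT : Ergodic T μ) (hf : Measurable f)
    (hfi : Integrable f μ) {c : ℝ} (hc : ∫ x, f x ∂μ < c) :
    ∀ᵐ x ∂μ, ∀ᶠ n in atTop, birkhoffAverage ℝ T f n x < c := by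
  obtain ⟨c', hfc', hc'c⟩ := exists_between hc
  have hsub : ∀ n x, birkhoffSum T (fun y => f y - c') n x = birkhoffSum T f n x - n * c' := by
    intro n x
    simp [birkhoffSum, Finset.sum_sub_distrib]
  have hint : ∫ x, (f x - c') ∂μ < 0 := by
    rw [integral_sub hfi (integrable_const c'), integral_const, probReal_univ, one_smul]
    linarith
  filter_upwards [hT.ae_bddAbove_birkhoffSum (f := fun y => f y - c') (hf.sub measurable_const)
    (hfi.sub (integrable_const c')) hint] with x ⟨M, hM⟩
  have hM' : ∀ n, birkhoffSum T f n x ≤ M + n * c' := fun n => by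
    linarith [hM (mem_range_self n), hsub n x]
  filter_upwards [(tendsto_const_div_atTop_nhds_zero_nat M).eventually
    (gt_mem_nhds (show 0 < c - c' by linarith)), eventually_gt_atTop 0] with n hn hn0
  have hn0' : (0 : ℝ) < n := Nat.cast_pos.2 hn0
  rw [birkhoffAverage, smul_eq_mul, inv_mul_eq_div, div_lt_iff₀ hn0']
  rw [div_lt_iff₀ hn0'] at hn
  linarith [hM' n]

theorem Ergodic.ae_tendsto_birkhoffAverage (hT : Ergodic T μ) (hfi : Integrable f μ) :
    ∀ᵐ x ∂μ, Tendsto (fun n => birkhoffAverage ℝ T f n x) atTop (𝓝 (∫ x, f x ∂μ)) := by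
  wlog hf : Measurable f generalizing f
  · set g := hfi.1.mk f
    have hfg : f =ᵐ[μ] g := hfi.1.ae_eq_mk
    have hA := ae_all_iff.2 fun n =>
      hT.quasiMeasurePreserving.birkhoffAverage_ae_eq_of_ae_eq ℝ hfg n
    filter_upwards [this (hfi.congr hfg) hfi.1.stronglyMeasurable_mk.measurable, hA]
      with x hx hAx
    rw [integral_congr_ae hfg]
    simpa only [hAx] using hx
  have hlt : ∀ g : α → ℝ, Measurable g → Integrable g μ →
      ∀ᵐ x ∂μ, ∀ q : ℚ, ∫ x, g x ∂μ < q → ∀ᶠ n in atTop, birkhoffAverage ℝ T g n x < q :=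
    fun g hg hgi => ae_all_iff.2 fun q => by
      by_cases hq : ∫ x, g x ∂μ < q
      · exact (hT.ae_eventually_birkhoffAverage_lt hg hgi hq).mono fun _ h _ => h
      · exact Eventually.of_forall fun _ h => absurd h hq
  filter_upwards [hlt f hf hfi, hlt (-f) hf.neg hfi.neg] with x hup hdown
  refine tendsto_order.2 ⟨fun a ha => ?_, fun b hb => ?_⟩
  · obtain ⟨q, haq, hq⟩ := exists_rat_btwn ha
    refine (hdown (-q) ?_).mono fun n hn => ?_
    · simp only [Pi.neg_apply, integral_neg, Rat.cast_neg]; linarith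
    · rw [birkhoffAverage_neg, Rat.cast_neg, Pi.neg_apply, Pi.neg_apply] at hn; linarith
  · obtain ⟨q, hq, hqb⟩ := exists_rat_btwn hb
    exact (hup q hq).mono fun n hn => hn.trans hqb

end Birkhoff

section Tail

open ProbabilityTheory

lemma mem_Btau {s t : ℝ} : t ∈ Btau s ↔ s ≤ |t| := by
  rw [Btau, mem_union, mem_Iic, mem_Ici, le_abs', le_neg]

lemma Btau_eq_preimage_abs (s : ℝ) : Btau s = abs ⁻¹' Ici s := ext fun _ => mem_Btau

lemma measurableSet_Btau (s : ℝ) : MeasurableSet (Btau s) :=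
  measurableSet_Iic.union measurableSet_Ici

lemma Btau_antitone : Antitone Btau := fun _ _ h _ ht => mem_Btau.2 (h.trans (mem_Btau.1 ht))

lemma Btau_of_nonpos {s : ℝ} (h : s ≤ 0) : Btau s = univ :=
  eq_univ_of_forall fun t => mem_Btau.2 (h.trans (abs_nonneg t))

variable {ν₁ : Measure ℝ}

lemma phiTail_sub_phiTail [IsFiniteMeasure ν₁] {s s' : ℝ} (h : s ≤ s') :
    phiTail ν₁ s - phiTail ν₁ s' = ν₁.real (Btau s \ Btau s') :=
  (measureReal_sdiff (Btau_antitone h) (measurableSet_Btau s')).symm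

lemma phiTail_antitone [IsFiniteMeasure ν₁] : Antitone (phiTail ν₁) :=
  fun _ _ h => measureReal_mono (Btau_antitone h)

lemma map_abs_singleton [NullSingletonClass ν₁] (τ : ℝ) : ν₁.map abs {τ} = 0 := by
  rw [Measure.map_apply measurable_abs (measurableSet_singleton τ)]
  refine measure_mono_null (fun t (ht : |t| = τ) => ?_)
    ((Set.toFinite {τ, -τ}).measure_zero ν₁)
  rcases abs_choice t with h | h
  · exact .inl (by rw [← ht, h])
  · exact .inr (by rw [mem_singleton_iff, ← ht, h, neg_neg])

variable [IsProbabilityMeasure ν₁]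

lemma phiTail_of_nonpos {τ : ℝ} (h : τ ≤ 0) : phiTail ν₁ τ = 1 := by
  simp [phiTail, Btau_of_nonpos h]

lemma phiTail_le_one (τ : ℝ) : phiTail ν₁ τ ≤ 1 := measureReal_le_one

variable [NullSingletonClass ν₁]

lemma phiTail_eq_one_sub_cdf (τ : ℝ) : phiTail ν₁ τ = 1 - cdf (ν₁.map abs) τ := by
  have := Measure.isProbabilityMeasure_map (μ := ν₁) measurable_abs.aemeasurable
  rw [cdf_eq_real, ← measureReal_congr (Iio_ae_eq_Iic' (map_abs_singleton τ)),
    ← probReal_compl_eq_one_sub measurableSet_Iio, compl_Iio,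
    map_measureReal_apply measurable_abs measurableSet_Ici, phiTail, Btau_eq_preimage_abs]
  rfl

lemma continuous_phiTail : Continuous (phiTail ν₁) := by
  have := Measure.isProbabilityMeasure_map (μ := ν₁) measurable_abs.aemeasurable
  set F := cdf (ν₁.map abs)
  have hF : Continuous F := continuous_iff_continuousAt.2 fun a => by
    refine F.mono.continuousAt_iff_leftLim_eq_rightLim.2 (le_antisymm ?_ ?_)
    · rw [F.rightLim_eq]; exact F.mono.leftLim_le le_rfl
    · have h := F.measure_singleton a
      rw [measure_cdf, map_abs_singleton, eq_comm, ENNReal.ofReal_eq_zero, sub_nonpos] at h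
      rwa [F.rightLim_eq]
  rw [show phiTail ν₁ = fun τ => 1 - F τ from funext phiTail_eq_one_sub_cdf]
  exact continuous_const.sub hF

lemma tendsto_phiTail_atTop : Tendsto (phiTail ν₁) atTop (𝓝 0) := by
  have := Measure.isProbabilityMeasure_map (μ := ν₁) measurable_abs.aemeasurable
  simpa [funext (phiTail_eq_one_sub_cdf (ν₁ := ν₁))] using
    (tendsto_const_nhds (x := (1 : ℝ))).sub (tendsto_cdf_atTop (μ := ν₁.map abs))

lemma exists_phiTail_eq {r : ℝ} (hr : r ∈ Ioc 0 1) : ∃ τ, 0 ≤ τ ∧ phiTail ν₁ τ = r := by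
  obtain ⟨M, hM, hM0⟩ := (((tendsto_phiTail_atTop (ν₁ := ν₁)).eventually
    (gt_mem_nhds hr.1)).and (eventually_ge_atTop 0)).exists
  obtain ⟨τ, hτ, hτr⟩ := intermediate_value_Icc' hM0 continuous_phiTail.continuousOn
    ⟨hM.le, (phiTail_of_nonpos (ν₁ := ν₁) le_rfl).symm ▸ hr.2⟩
  exact ⟨τ, hτ.1, hτr⟩

lemma exists_rat_phiTail_mem_Ioo {a b : ℝ} (hab : a < b) (hb : 0 < b) (ha : a < 1) :
    ∃ q : ℚ, phiTail ν₁ q ∈ Ioo a b := by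
  obtain ⟨c, hac, hcb⟩ := exists_between (max_lt (lt_min hab ha) (lt_min hb one_pos))
  obtain ⟨s, -, hs⟩ := exists_phiTail_eq (ν₁ := ν₁)
    ⟨(le_max_right a 0).trans_lt hac, (hcb.trans_le (min_le_right b 1)).le⟩
  exact Rat.denseRange_cast.exists_mem_open (isOpen_Ioo.preimage continuous_phiTail)
    ⟨s, by
      rw [mem_preimage, hs]
      exact ⟨(le_max_left a 0).trans_lt hac, hcb.trans_le (min_le_left b 1)⟩⟩

lemma exists_seq_rat_phiTail_lt {τ : ℝ} (hτ : 0 < phiTail ν₁ τ) :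
    ∃ u : ℕ → ℚ, (∀ j, phiTail ν₁ (u j) < phiTail ν₁ τ) ∧
      Tendsto (fun j => phiTail ν₁ (u j)) atTop (𝓝 (phiTail ν₁ τ)) := by
  have h := fun j : ℕ => exists_rat_phiTail_mem_Ioo (ν₁ := ν₁)
    (sub_lt_self (phiTail ν₁ τ) (Nat.one_div_pos_of_nat (n := j))) hτ
    ((sub_lt_self _ Nat.one_div_pos_of_nat).trans_le (phiTail_le_one τ))
  choose u hu using h
  refine ⟨u, fun j => (hu j).2, tendsto_of_tendsto_of_tendsto_of_le_of_le ?_ tendsto_const_nhds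
    (fun j => (hu j).1.le) fun j => (hu j).2.le⟩
  simpa using (tendsto_one_div_add_atTop_nhds_zero_nat (𝕜 := ℝ)).const_sub (phiTail ν₁ τ)

lemma exists_seq_rat_phiTail_gt {τ : ℝ} (hτ : phiTail ν₁ τ < 1) :
    ∃ u : ℕ → ℚ, (∀ j, phiTail ν₁ τ < phiTail ν₁ (u j)) ∧
      Tendsto (fun j => phiTail ν₁ (u j)) atTop (𝓝 (phiTail ν₁ τ)) := by
  have h := fun j : ℕ => exists_rat_phiTail_mem_Ioo (ν₁ := ν₁)
    (lt_add_of_pos_right (phiTail ν₁ τ) (Nat.one_div_pos_of_nat (n := j)))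
    (measureReal_nonneg.trans_lt (lt_add_of_pos_right _ Nat.one_div_pos_of_nat)) hτ
  choose u hu using h
  refine ⟨u, fun j => (hu j).1, tendsto_of_tendsto_of_tendsto_of_le_of_le tendsto_const_nhds ?_
    (fun j => (hu j).1.le) fun j => (hu j).2.le⟩
  simpa using (tendsto_one_div_add_atTop_nhds_zero_nat (𝕜 := ℝ)).const_add (phiTail ν₁ τ)

end Tail

section Energy

variable {ν₁ : Measure ℝ}

/-- The two tails differ by a set of `ν₁`-measure `|φ(u i) - φ(τ)|`. -/
lemma tendsto_setIntegral_Btau [IsFiniteMeasure ν₁] {f : ℝ → ℝ} (hf : Integrable f ν₁)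
    {ι : Type*} {l : Filter ι} {u : ι → ℝ} {τ : ℝ}
    (hu : Tendsto (fun i => phiTail ν₁ (u i)) l (𝓝 (phiTail ν₁ τ))) :
    Tendsto (fun i => ∫ t in Btau (u i), f t ∂ν₁) l (𝓝 (∫ t in Btau τ, f t ∂ν₁)) := by
  set D := fun s => Btau (min s τ) \ Btau (max s τ)
  have hD : ∀ s, ν₁.real (D s) = |phiTail ν₁ s - phiTail ν₁ τ| ∧
      ‖∫ t in Btau s, f t ∂ν₁ - ∫ t in Btau τ, f t ∂ν₁‖ = ‖∫ t in D s, f t ∂ν₁‖ := by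
    intro s
    rcases le_total s τ with h | h
    · simp only [D, min_eq_left h, max_eq_right h, ← phiTail_sub_phiTail h,
        setIntegral_sdiff (measurableSet_Btau τ) hf.integrableOn (Btau_antitone h)]
      exact ⟨(abs_of_nonneg (sub_nonneg.2 (phiTail_antitone h))).symm, trivial⟩
    · simp only [D, min_eq_right h, max_eq_left h, ← phiTail_sub_phiTail h,
        setIntegral_sdiff (measurableSet_Btau s) hf.integrableOn (Btau_antitone h), abs_sub_comm,
        norm_sub_rev]
      exact ⟨(abs_of_nonneg (sub_nonneg.2 (phiTail_antitone h))).symm, trivial⟩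
  have hDu : Tendsto (fun i => ν₁ (D (u i))) l (𝓝 0) := by
    simp_rw [fun i => (ofReal_measureReal (μ := ν₁) (s := D (u i))).symm, (hD _).1]
    simpa using ENNReal.tendsto_ofReal ((hu.sub_const (phiTail ν₁ τ)).abs)
  refine tendsto_iff_norm_sub_tendsto_zero.2 ?_
  simpa only [(hD _).2, norm_zero] using (hf.tendsto_setIntegral_nhds_zero hDu).norm

lemma integrable_rpow_abs {p : ℝ} (h : momentP p ν₁ < ∞) : Integrable (fun t => |t| ^ p) ν₁ := by
  refine ⟨(measurable_abs.pow_const p).aestronglyMeasurable, ?_⟩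
  rw [hasFiniteIntegral_iff_ofReal
    (Eventually.of_forall fun t => Real.rpow_nonneg (abs_nonneg t) p)]
  exact h

lemma vP_eq (p : ℝ) (A : Set ℝ) :
    vP p ν₁ A = (∫ t in A, |t| ^ p ∂ν₁) / ∫ t, |t| ^ p ∂ν₁ := by
  have hnn : ∀ μ : Measure ℝ, 0 ≤ᵐ[μ] fun t => |t| ^ p :=
    fun _ => Eventually.of_forall fun t => Real.rpow_nonneg (abs_nonneg t) p
  have hm := (measurable_abs.pow_const p).aestronglyMeasurable (μ := ν₁)
  rw [vP, ENNReal.toReal_div, momentP, integral_eq_lintegral_of_nonneg_ae (hnn _) hm,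
    integral_eq_lintegral_of_nonneg_ae (hnn _) hm.restrict]

variable {p : ℝ}

lemma integral_rpow_abs_pos (h0 : 0 < momentP p ν₁) (hfin : momentP p ν₁ < ∞) :
    0 < ∫ t, |t| ^ p ∂ν₁ := by
  rw [integral_eq_lintegral_of_nonneg_ae (Eventually.of_forall fun t =>
    Real.rpow_nonneg (abs_nonneg t) p) (integrable_rpow_abs hfin).1]
  exact ENNReal.toReal_pos h0.ne' hfin.ne

lemma one_sub_vP_eq (h0 : 0 < momentP p ν₁) (hfin : momentP p ν₁ < ∞) {A : Set ℝ}
    (hA : MeasurableSet A) :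
    1 - vP p ν₁ A = (∫ t in Aᶜ, |t| ^ p ∂ν₁) / ∫ t, |t| ^ p ∂ν₁ := by
  have hpos := integral_rpow_abs_pos h0 hfin
  have hsplit := integral_add_compl hA (integrable_rpow_abs hfin)
  rw [vP_eq, eq_div_iff hpos.ne', sub_mul, div_mul_cancel₀ _ hpos.ne']
  linarith

lemma one_sub_vP_Btau_eq_zero [IsProbabilityMeasure ν₁] (h0 : 0 < momentP p ν₁)
    (hfin : momentP p ν₁ < ∞) {τ : ℝ} (h : phiTail ν₁ τ = 1) : 1 - vP p ν₁ (Btau τ) = 0 := by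
  have hc : ν₁ (Btau τ)ᶜ = 0 := (prob_compl_eq_zero_iff (measurableSet_Btau τ)).2
    ((ENNReal.toReal_eq_one_iff _).1 h)
  rw [one_sub_vP_eq h0 hfin (measurableSet_Btau τ), setIntegral_measure_zero _ hc, zero_div]

lemma tendsto_one_sub_vP_Btau [IsFiniteMeasure ν₁] (hfin : momentP p ν₁ < ∞) {ι : Type*}
    {l : Filter ι} {u : ι → ℝ} {τ : ℝ}
    (hu : Tendsto (fun i => phiTail ν₁ (u i)) l (𝓝 (phiTail ν₁ τ))) :
    Tendsto (fun i => 1 - vP p ν₁ (Btau (u i))) l (𝓝 (1 - vP p ν₁ (Btau τ))) := by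
  simp only [vP_eq]
  exact ((tendsto_setIntegral_Btau (integrable_rpow_abs hfin) hu).div_const _).const_sub 1

end Energy

section AMS

lemma measurable_shift : Measurable shift :=
  measurable_pi_lambda _ fun n => measurable_pi_apply (n + 1)

lemma shift_iterate_apply (i : ℕ) (x : ℕ → ℝ) (j : ℕ) : shift^[i] x j = x (j + i) := by
  induction i generalizing j with
  | zero => rfl
  | succ i ih => rw [Function.iterate_succ_apply', shift, ih]; ring_nf

lemma birkhoffAverage_shift_apply (h : ℝ → ℝ) (n : ℕ) (x : ℕ → ℝ) :
    birkhoffAverage ℝ shift (fun y => h (y 0)) n x = (∑ i ∈ Finset.range n, h (x i)) / n := by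
  simp [birkhoffAverage, birkhoffSum, shift_iterate_apply, div_eq_inv_mul]

lemma birkhoffAverage_succ_apply (u : ℕ → ℝ) (n m : ℕ) :
    birkhoffAverage ℝ Nat.succ u n m = (∑ i ∈ Finset.range n, u (m + i)) / n := by
  simp [birkhoffAverage, birkhoffSum, Nat.succ_iterate, div_eq_inv_mul]

variable {μ ν : Measure (ℕ → ℝ)}

namespace HasStationaryMean

lemma measure_eq_of_preimage_eq (hAMS : HasStationaryMean μ ν) [IsFiniteMeasure μ]
    [IsFiniteMeasure ν] {F : Set (ℕ → ℝ)} (hF : MeasurableSet F) (hinv : shift ⁻¹' F = F) :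
    μ F = ν F := by
  have hiter : ∀ i, shift^[i] ⁻¹' F = F := fun i => Function.IsFixedPt.preimage_iterate hinv i
  have hconst : ∀ n : ℕ, 0 < n →
      (∑ i ∈ Finset.range n, (μ (shift^[i] ⁻¹' F)).toReal) / n = (μ F).toReal := by
    intro n hn
    simp only [hiter, Finset.sum_const, Finset.card_range, nsmul_eq_mul]
    field_simp
  have := tendsto_nhds_unique
    ((hAMS F hF).congr' ((eventually_gt_atTop 0).mono hconst)) tendsto_const_nhds
  exact (ENNReal.toReal_eq_toReal_iff' (measure_ne_top ν F) (measure_ne_top μ F)).1 this |>.symm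

lemma measurePreserving_shift (hAMS : HasStationaryMean μ ν) [IsFiniteMeasure ν] :
    MeasurePreserving shift ν ν := by
  refine ⟨measurable_shift, Measure.ext fun F hF => ?_⟩
  rw [Measure.map_apply measurable_shift hF]
  set u : ℕ → ℝ := fun i => (μ (shift^[i] ⁻¹' F)).toReal
  have h₀ : Tendsto (fun n => birkhoffAverage ℝ Nat.succ u n 0) atTop (𝓝 (ν F).toReal) := by
    simpa [birkhoffAverage_succ_apply] using hAMS F hF
  have h₁ : Tendsto (fun n => birkhoffAverage ℝ Nat.succ u n 1) atTop
      (𝓝 (ν (shift ⁻¹' F)).toReal) := by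
    refine (hAMS (shift ⁻¹' F) (measurable_shift hF)).congr fun n => ?_
    rw [birkhoffAverage_succ_apply]
    congr 1
    refine Finset.sum_congr rfl fun i _ => ?_
    simp only [u, add_comm 1 i, Function.iterate_succ', preimage_comp]
  have := tendsto_nhds_unique h₁ (tendsto_birkhoffAverage_apply_iff.2 h₀)
  exact (ENNReal.toReal_eq_toReal_iff' (measure_ne_top _ _) (measure_ne_top _ _)).1 this

lemma ergodic_shift (hAMS : HasStationaryMean μ ν) [IsProbabilityMeasure μ]
    [IsProbabilityMeasure ν] (herg : IsErgodicShift μ) : Ergodic shift ν := by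
  refine ⟨hAMS.measurePreserving_shift, ⟨fun F hF hinv => ?_⟩⟩
  rw [eventuallyConst_set', ae_eq_empty, ae_eq_univ, prob_compl_eq_zero_iff hF,
    ← hAMS.measure_eq_of_preimage_eq hF hinv]
  exact herg F hF hinv

/-- The averages converge on a shift-invariant set, which has full `ν`-measure by Birkhoff's
theorem and hence full `μ`-measure. -/
theorem ae_tendsto_sum_div (hAMS : HasStationaryMean μ ν) [IsProbabilityMeasure μ]
    [IsProbabilityMeasure ν] (herg : IsErgodicShift μ) {h : ℝ → ℝ} (hm : Measurable h)
    (hi : Integrable h (marginal1 ν)) :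
    ∀ᵐ x ∂μ, Tendsto (fun n : ℕ => (∑ i ∈ Finset.range n, h (x i)) / n) atTop
      (𝓝 (∫ t, h t ∂(marginal1 ν))) := by
  have he : Measurable fun x : ℕ → ℝ => x 0 := measurable_pi_apply 0
  rw [marginal1, integral_map he.aemeasurable hi.1]
  set g : (ℕ → ℝ) → ℝ := fun y => h (y 0)
  have hg : Measurable g := hm.comp he
  set C := {x | Tendsto (fun n => birkhoffAverage ℝ shift g n x) atTop (𝓝 (∫ y, g y ∂ν))}
  have hS : ∀ n, Measurable (birkhoffSum shift g n) := fun n =>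
    Finset.measurable_sum _ fun i _ => hg.comp (measurable_shift.iterate i)
  have hC : MeasurableSet C := measurableSet_tendsto _ fun n => (hS n).const_smul ((n : ℝ)⁻¹)
  have hinv : shift ⁻¹' C = C := Set.ext fun x => tendsto_birkhoffAverage_apply_iff
  have hνC : ∀ᵐ x ∂ν, x ∈ C := ((hAMS.ergodic_shift herg).ae_tendsto_birkhoffAverage
    ((integrable_map_measure hi.1 he.aemeasurable).1 hi))
  have hμC : μ Cᶜ = 0 := by
    rw [hAMS.measure_eq_of_preimage_eq hC.compl (by rw [preimage_compl, hinv])]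
    exact ae_iff.1 hνC
  filter_upwards [measure_eq_zero_iff_ae_notMem.1 hμC] with x hx
  simpa [C, g, birkhoffAverage_shift_apply] using not_not.1 hx

open Finset in
theorem ae_tendsto_empirical [IsProbabilityMeasure μ] [IsProbabilityMeasure ν]
    (hAMS : HasStationaryMean μ ν) (herg : IsErgodicShift μ) {p : ℝ}
    (h0 : 0 < momentP p (marginal1 ν))
    (hfin : momentP p (marginal1 ν) < ∞) :
    ∀ᵐ x ∂μ, ∀ q : ℚ,
      Tendsto (fun n => (#{i ∈ range n | x i ∈ Btau q} : ℝ) / n) atTop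
        (𝓝 (phiTail (marginal1 ν) q)) ∧
      Tendsto (fun n => (∑ i ∈ range n with x i ∉ Btau q, |x i| ^ p) /
        ∑ i ∈ range n, |x i| ^ p) atTop (𝓝 (1 - vP p (marginal1 ν) (Btau q))) := by
  have : IsProbabilityMeasure (marginal1 ν) :=
    Measure.isProbabilityMeasure_map (measurable_pi_apply 0).aemeasurable
  have hI := integrable_rpow_abs hfin
  have hm : Measurable fun t : ℝ => |t| ^ p := measurable_abs.pow_const p
  have hcount : ∀ q : ℚ, ∀ᵐ x ∂μ, Tendsto (fun n => (#{i ∈ range n | x i ∈ Btau q} : ℝ) / n)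
      atTop (𝓝 (phiTail (marginal1 ν) q)) := fun q => by
    have := hAMS.ae_tendsto_sum_div herg (measurable_const.indicator (measurableSet_Btau q))
      ((integrable_const (1 : ℝ)).indicator (measurableSet_Btau q))
    rw [integral_indicator_const _ (measurableSet_Btau q), smul_eq_mul, mul_one] at this
    simpa [indicator_apply, phiTail, measureReal_def] using this
  have hlow : ∀ q : ℚ, ∀ᵐ x ∂μ,
      Tendsto (fun n => (∑ i ∈ range n with x i ∉ Btau q, |x i| ^ p) / (n : ℝ)) atTop
        (𝓝 (∫ t in (Btau q)ᶜ, |t| ^ p ∂(marginal1 ν))) := fun q => by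
    have := hAMS.ae_tendsto_sum_div herg (hm.indicator (measurableSet_Btau q).compl)
      (hI.indicator (measurableSet_Btau q).compl)
    rw [integral_indicator (measurableSet_Btau q).compl] at this
    simpa [indicator_apply, sum_filter] using this
  filter_upwards [hAMS.ae_tendsto_sum_div herg hm hI, ae_all_iff.2 hcount, ae_all_iff.2 hlow]
    with x htot hc hl q
  refine ⟨hc q, ?_⟩
  rw [one_sub_vP_eq h0 hfin (measurableSet_Btau q)]
  refine ((hl q).div htot (integral_rpow_abs_pos h0 hfin).ne').congr' ?_
  filter_upwards [eventually_gt_atTop 0] with n hn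
  exact div_div_div_cancel_right₀ (Nat.cast_ne_zero.2 hn.ne') _ _

end HasStationaryMean

end AMS

section BestTerm

open Finset

lemma sum_le_sum_of_card_le_of_forall_sdiff_le {ι : Type*} [DecidableEq ι] {S B : Finset ι}
    {f : ι → ℝ} (hf : ∀ i, 0 ≤ f i) (hcard : #S ≤ #B)
    (hle : ∀ i ∈ S \ B, ∀ j ∈ B \ S, f i ≤ f j) : ∑ i ∈ S, f i ≤ ∑ i ∈ B, f i := by
  rw [← sum_inter_add_sum_sdiff S B, ← sum_inter_add_sum_sdiff B S, Finset.inter_comm B S]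
  refine add_le_add_right (α := ℝ) ?_ _
  rcases (S \ B).eq_empty_or_nonempty with h | hne
  · rw [h, sum_empty]; exact sum_nonneg fun i _ => hf i
  · set c := (S \ B).sup' hne f
    calc ∑ i ∈ S \ B, f i ≤ #(S \ B) • c := sum_le_card_nsmul _ _ _ fun i hi => le_sup' f hi
      _ ≤ #(B \ S) • c := nsmul_le_nsmul_left ((hf _).trans (le_sup' f hne.choose_spec))
          (card_sdiff_le_card_sdiff_iff.2 hcard)
      _ ≤ ∑ i ∈ B \ S, f i := card_nsmul_le_sum _ _ _ fun j hj => sup'_le _ _ fun i hi =>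
          hle i hi j hj

variable {n k : ℕ} {p s : ℝ} (y : Fin n → ℝ)

lemma sigmaP_of_lt (h : n < k) : sigmaP p n k y = 0 := by
  have : {e : ℝ | ∃ S : Finset (Fin n), #S = k ∧ e = (∑ i ∈ Sᶜ, |y i| ^ p) ^ (1 / p)} = ∅ :=
    Set.eq_empty_of_forall_notMem fun e ⟨S, hS, _⟩ =>
      (card_le_univ S).not_gt (by simpa [hS] using h)
  rw [sigmaP, this, Real.sInf_empty]

lemma sigmaP_le {S : Finset (Fin n)} (hS : #S = k) :
    sigmaP p n k y ≤ (∑ i ∈ Sᶜ, |y i| ^ p) ^ (1 / p) :=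
  csInf_le ⟨0, by rintro e ⟨T, -, rfl⟩; positivity⟩ ⟨S, hS, rfl⟩

lemma exists_sigmaP_eq (hk : k ≤ n) :
    ∃ S : Finset (Fin n), #S = k ∧ sigmaP p n k y = (∑ i ∈ Sᶜ, |y i| ^ p) ^ (1 / p) := by
  obtain ⟨S, -, hS⟩ := exists_subset_card_eq (s := (univ : Finset (Fin n))) (by simpa using hk)
  set E := {e : ℝ | ∃ S : Finset (Fin n), #S = k ∧ e = (∑ i ∈ Sᶜ, |y i| ^ p) ^ (1 / p)}
  have hfin : E.Finite :=
    (Set.finite_range fun S : Finset (Fin n) => (∑ i ∈ Sᶜ, |y i| ^ p) ^ (1 / p)).subset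
      fun e ⟨S, _, he⟩ => ⟨S, he.symm⟩
  exact Set.Nonempty.csInf_mem (s := E) ⟨_, S, hS, rfl⟩ hfin

lemma sigmaP_nonneg : 0 ≤ sigmaP p n k y :=
  Real.sInf_nonneg fun _ ⟨_, _, he⟩ => he ▸ by positivity

lemma sigmaP_le_of_card_le (hp : 0 ≤ p) (hk : #{i | y i ∈ Btau s} ≤ k) :
    sigmaP p n k y ≤ (∑ i with y i ∉ Btau s, |y i| ^ p) ^ (1 / p) := by
  rcases lt_or_ge n k with hkn | hkn
  · rw [sigmaP_of_lt y hkn]; positivity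
  obtain ⟨S, hBS, -, hS⟩ := exists_subsuperset_card_eq (subset_univ _) hk (by simpa using hkn)
  refine (sigmaP_le y hS).trans (Real.rpow_le_rpow (by positivity)
    (sum_le_sum_of_subset_of_nonneg (fun i hi => ?_) fun i _ _ => by positivity) (by positivity))
  simp only [Finset.mem_compl, Finset.mem_filter, Finset.mem_univ, true_and] at hi ⊢
  exact fun h => hi (hBS (by simpa using h))

lemma le_sigmaP_of_le_card (hp : 0 ≤ p) (hk : k ≤ #{i | y i ∈ Btau s}) :
    (∑ i with y i ∉ Btau s, |y i| ^ p) ^ (1 / p) ≤ sigmaP p n k y := by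
  obtain ⟨S, hS, heq⟩ := exists_sigmaP_eq (p := p) y (hk.trans (card_le_univ _) |>.trans_eq
    (Fintype.card_fin n))
  rw [heq]
  refine Real.rpow_le_rpow (by positivity) ?_ (by positivity)
  have hSB := sum_le_sum_of_card_le_of_forall_sdiff_le (f := fun i => |y i| ^ p)
    (B := {i | y i ∈ Btau s}) (fun i => by positivity) (hS ▸ hk) fun i hi j hj => by
      simp only [Finset.mem_sdiff, Finset.mem_filter, Finset.mem_univ, true_and, mem_Btau,
        not_le] at hi hj
      exact Real.rpow_le_rpow (abs_nonneg _) (hi.2.trans_le hj.1).le hp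
  have h₁ := sum_compl_add_sum S fun i => |y i| ^ p
  have h₂ := sum_filter_not_add_sum_filter univ (fun i => y i ∈ Btau s) fun i => |y i| ^ p
  linarith

lemma sigmaTilde_nonneg : 0 ≤ sigmaTilde p n k y :=
  div_nonneg (sigmaP_nonneg y) (by positivity)

lemma sigmaTilde_le_of_card_le (hp : 0 ≤ p) (hk : #{i | y i ∈ Btau s} ≤ k) :
    sigmaTilde p n k y ≤
      ((∑ i with y i ∉ Btau s, |y i| ^ p) / ∑ i, |y i| ^ p) ^ (1 / p) := by
  rw [sigmaTilde, Real.div_rpow (by positivity) (by positivity)]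
  exact div_le_div_of_nonneg_right (sigmaP_le_of_card_le y hp hk) (by positivity)

lemma le_sigmaTilde_of_le_card (hp : 0 ≤ p) (hk : k ≤ #{i | y i ∈ Btau s}) :
    ((∑ i with y i ∉ Btau s, |y i| ^ p) / ∑ i, |y i| ^ p) ^ (1 / p) ≤
      sigmaTilde p n k y := by
  rw [sigmaTilde, Real.div_rpow (by positivity) (by positivity)]
  exact div_le_div_of_nonneg_right (le_sigmaP_of_le_card y hp hk) (by positivity)

end BestTerm

section Empirical

open Finset

variable {x : ℕ → ℝ} {n : ℕ}

lemma card_filter_proj (P : ℝ → Prop) [DecidablePred P] :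
    #{i | P (proj n x i)} = #{i ∈ range n | P (x i)} := by
  rw [card_filter, card_filter]
  exact Fin.sum_univ_eq_sum_range (fun i => if P (x i) then 1 else 0) n

lemma sum_filter_proj (P : ℝ → Prop) [DecidablePred P] (g : ℝ → ℝ) :
    ∑ i with P (proj n x i), g (proj n x i) = ∑ i ∈ range n with P (x i), g (x i) := by
  rw [sum_filter, sum_filter]
  exact Fin.sum_univ_eq_sum_range (fun i => if P (x i) then g (x i) else 0) n

lemma sum_proj (g : ℝ → ℝ) : ∑ i, g (proj n x i) = ∑ i ∈ range n, g (x i) :=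
  Fin.sum_univ_eq_sum_range (fun i => g (x i)) n

variable {k : ℕ → ℕ} {p r s φ c : ℝ}

lemma eventually_sigmaTilde_lt (hp : 0 < p) (hk : Tendsto (fun n => (k n : ℝ) / n) atTop (𝓝 r))
    (hcount : Tendsto (fun n => (#{i ∈ range n | x i ∈ Btau s} : ℝ) / n) atTop (𝓝 φ))
    (hφ : φ < r)
    (hratio : Tendsto (fun n => (∑ i ∈ range n with x i ∉ Btau s, |x i| ^ p) /
      ∑ i ∈ range n, |x i| ^ p) atTop (𝓝 c)) {b : ℝ} (hb : c ^ (1 / p) < b) :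
    ∀ᶠ n in atTop, sigmaTilde p n (k n) (proj n x) < b := by
  have hroot := ((Real.continuousAt_rpow_const c (1 / p) (.inr (by positivity))).tendsto.comp
    hratio).eventually (gt_mem_nhds hb)
  filter_upwards [hcount.eventually_lt hk hφ, hroot, eventually_gt_atTop 0] with n hn hn' hn0
  rw [div_lt_div_iff_of_pos_right (by positivity), Nat.cast_lt] at hn
  calc sigmaTilde p n (k n) (proj n x)
      _ ≤ _ := sigmaTilde_le_of_card_le _ hp.le
          ((card_filter_proj (· ∈ Btau s)).trans_le hn.le)
      _ < b := by
          rw [sum_filter_proj (· ∉ Btau s) (|·| ^ p), sum_proj (|·| ^ p)]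
          exact hn'

lemma eventually_lt_sigmaTilde (hp : 0 < p) (hk : Tendsto (fun n => (k n : ℝ) / n) atTop (𝓝 r))
    (hcount : Tendsto (fun n => (#{i ∈ range n | x i ∈ Btau s} : ℝ) / n) atTop (𝓝 φ))
    (hφ : r < φ)
    (hratio : Tendsto (fun n => (∑ i ∈ range n with x i ∉ Btau s, |x i| ^ p) /
      ∑ i ∈ range n, |x i| ^ p) atTop (𝓝 c)) {a : ℝ} (ha : a < c ^ (1 / p)) :
    ∀ᶠ n in atTop, a < sigmaTilde p n (k n) (proj n x) := by
  have hroot := ((Real.continuousAt_rpow_const c (1 / p) (.inr (by positivity))).tendsto.comp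
    hratio).eventually (lt_mem_nhds ha)
  filter_upwards [hk.eventually_lt hcount hφ, hroot, eventually_gt_atTop 0] with n hn hn' hn0
  rw [div_lt_div_iff_of_pos_right (by positivity), Nat.cast_lt] at hn
  calc a < _ := by
        rw [sum_filter_proj (· ∉ Btau s) (|·| ^ p), sum_proj (|·| ^ p)]
        exact hn'
    _ ≤ sigmaTilde p n (k n) (proj n x) :=
      le_sigmaTilde_of_le_card _ hp.le (hn.le.trans_eq (card_filter_proj (· ∈ Btau s)).symm)

theorem tendsto_sigmaTilde_of_empirical {x : ℕ → ℝ} {k : ℕ → ℕ} {p r c : ℝ} {φ ψ : ℝ → ℝ}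
    (hp : 0 < p) (hk : Tendsto (fun n => (k n : ℝ) / n) atTop (𝓝 r))
    (hemp : ∀ q : ℚ,
      Tendsto (fun n => (#{i ∈ range n | x i ∈ Btau q} : ℝ) / n) atTop (𝓝 (φ q)) ∧
      Tendsto (fun n => (∑ i ∈ range n with x i ∉ Btau q, |x i| ^ p) /
        ∑ i ∈ range n, |x i| ^ p) atTop (𝓝 (ψ q)))
    (hup : ∃ u : ℕ → ℚ, (∀ j, φ (u j) < r) ∧ Tendsto (fun j => ψ (u j)) atTop (𝓝 c))
    (hdown : c ≠ 0 → ∃ u : ℕ → ℚ, (∀ j, r < φ (u j)) ∧ Tendsto (fun j => ψ (u j)) atTop (𝓝 c)) :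
    Tendsto (fun n => sigmaTilde p n (k n) (proj n x)) atTop (𝓝 (c ^ (1 / p))) := by
  have hroot := (Real.continuousAt_rpow_const c (1 / p) (.inr (by positivity))).tendsto
  refine tendsto_order.2 ⟨fun a ha => ?_, fun b hb => ?_⟩
  · by_cases hc : c = 0
    · rw [hc, Real.zero_rpow (by positivity)] at ha
      exact Eventually.of_forall fun n => ha.trans_le (sigmaTilde_nonneg _)
    obtain ⟨u, hu, hlim⟩ := hdown hc
    obtain ⟨j, hj⟩ := ((hroot.comp hlim).eventually (lt_mem_nhds ha)).exists
    exact eventually_lt_sigmaTilde hp hk (hemp (u j)).1 (hu j) (hemp (u j)).2 hj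
  · obtain ⟨u, hu, hlim⟩ := hup
    obtain ⟨j, hj⟩ := ((hroot.comp hlim).eventually (gt_mem_nhds hb)).exists
    exact eventually_sigmaTilde_lt hp hk (hemp (u j)).1 (hu j) (hemp (u j)).2 hj

end Empirical

/-- Theorem 1, part (ii): AMS ergodic process with finite positive `p`-th marginal moment and
absolutely continuous 1D stationary marginal: every rate `r ∈ (0,1]` is attained as a tail
probability `μ̄₁(B_{τ(r)}) = r`, and the relative approximation error converges a.s. to
`(1 − v_p(B_{τ(r)}))^{1/p}`. -/
theorem ams_ergodic_ac_approx_error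
    (p : ℝ) (hp : 0 < p) (μ ν : Measure (ℕ → ℝ))
    [IsProbabilityMeasure μ] [IsProbabilityMeasure ν]
    (hAMS : HasStationaryMean μ ν) (herg : IsErgodicShift μ)
    (hmom0 : 0 < momentP p (marginal1 ν)) (hmomfin : momentP p (marginal1 ν) < ∞)
    (hac : marginal1 ν ≪ (volume : Measure ℝ)) :
    ∀ r ∈ Set.Ioc (0:ℝ) 1,
      (∃ τ : ℝ, 0 ≤ τ ∧ phiTail (marginal1 ν) τ = r) ∧
      ∀ τ : ℝ, 0 ≤ τ → phiTail (marginal1 ν) τ = r →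
        ∀ k : ℕ → ℕ, Tendsto (fun n : ℕ => (k n : ℝ) / n) atTop (𝓝 r) →
          ∀ᵐ x ∂μ, Tendsto (fun n : ℕ => sigmaTilde p n (k n) (proj n x)) atTop
            (𝓝 ((1 - vP p (marginal1 ν) (Btau τ)) ^ (1 / p))) := by
  intro r hr
  have : IsProbabilityMeasure (marginal1 ν) :=
    Measure.isProbabilityMeasure_map (measurable_pi_apply 0).aemeasurable
  have : NullSingletonClass (marginal1 ν) := ⟨fun t => hac Real.volume_singleton⟩
  refine ⟨exists_phiTail_eq hr, fun τ _ hτ k hk => ?_⟩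
  filter_upwards [hAMS.ae_tendsto_empirical herg hmom0 hmomfin] with x hx
  refine tendsto_sigmaTilde_of_empirical (φ := phiTail (marginal1 ν))
    (ψ := fun s => 1 - vP p (marginal1 ν) (Btau s)) hp hk hx ?_ fun hc => ?_
  · obtain ⟨u, hu, hlim⟩ := exists_seq_rat_phiTail_lt (hτ ▸ hr.1)
    exact ⟨u, hτ ▸ hu, tendsto_one_sub_vP_Btau hmomfin hlim⟩
  · have hτ1 : phiTail (marginal1 ν) τ < 1 := (phiTail_le_one τ).lt_of_ne fun h =>
      hc (one_sub_vP_Btau_eq_zero hmom0 hmomfin h)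
    obtain ⟨u, hu, hlim⟩ := exists_seq_rat_phiTail_gt hτ1
    exact ⟨u, hτ ▸ hu, tendsto_one_sub_vP_Btau hmomfin hlim⟩

end
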